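/- arXiv:2604.10682 — 2 statements merged into one kernel-verified Lean document; each statement's English description precedes it below -/
import Mathlib

section
/- Let d ≥ 1, m ≥ 0 be integers. Let f : ℝ → ℝ be (m+2)-times continuously differentiable with Σ_{k=1}^{m+2} ‖f^{(k)}‖_{L^∞} ≤ 1, and let g₁, g₂ : ℝ^d → ℝ be m-times continuously differentiable with ‖∇^j g_i‖_{L^∞} < ∞ for all 0 ≤ j ≤ m and i = 1,2. Set M_j := max{‖∇^j g₁‖_{L^∞}, ‖∇^j g₂‖_{L^∞}} for 0 ≤ j ≤ m. Then there is a constant C depending only on d and m such that ‖∇^m (f ∘ g₁ − f ∘ g₂)‖_{L^∞} ≤ C Σ_{n=0}^{m} ‖∇^n (g₁ − g₂)‖_{L^∞} · ( M₁^{m−n} + M_{m−n} ), where for n = m the factor M₁^{0} + M₀ is read as 1 + M₀. -/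
/-!
Differentiating once, `D(f ∘ g₁ - f ∘ g₂) = (f' ∘ g₁ - f' ∘ g₂) • Dg₁ + (f' ∘ g₂) • D(g₁ - g₂)`.
The Leibniz rule together with induction on `m` (applied to `f'`) reduces the bound to two kinds
of terms: products `‖∇ᵖ gᵢ‖ ‖∇^q gⱼ‖`, and derivatives of `f' ∘ g₂`, which Faà di Bruno's bound
controls by products of the same kind. Both are handled by interpolation. The Landau–Kolmogorov
inequality `‖∇^{j+1} g‖² ≤ 8 ‖∇ʲ g‖ ‖∇^{j+2} g‖` makes the sup norms `aⱼ` of the derivatives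
log-convex once they are weighted by `8 ^ (j choose 2)`, and a log-convex sequence is bounded by
its values at the endpoints. Hence, with `tᵏ = a₁ᵏ + aₖ`, one gets `aⱼ ≤ C tʲ` for `1 ≤ j ≤ k`,
and so `aₚ a_q ≤ C² (a₁^{p+q} + a_{p+q})`.
-/

open Set Finset
open scoped NNReal Nat

def LogConvexUpTo (c : ℝ) (a : ℕ → ℝ) (K : ℕ) : Prop :=
  ∀ j, 1 ≤ j → j + 2 ≤ K → a (j + 1) ^ 2 ≤ c * (a j * a (j + 2))

/-- Used with `a 0 = 0`, so that the term `n = m` carries the weight `1`. -/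
def weightedDiffSum (a D : ℕ → ℝ) (m : ℕ) : ℝ :=
  ∑ n ∈ range (m + 1), D n * (a 1 ^ (m - n) + a (m - n))

theorem weightedDiffSum_nonneg {a D : ℕ → ℝ} {m : ℕ} (ha : ∀ j, 0 ≤ a j)
    (hD : ∀ n ≤ m, 0 ≤ D n) : 0 ≤ weightedDiffSum a D m :=
  sum_nonneg fun n hn => mul_nonneg (hD n (Nat.lt_succ_iff.mp (mem_range.mp hn)))
    (add_nonneg (pow_nonneg (ha 1) _) (ha _))

theorem weightedDiffSum_mono {a b D : ℕ → ℝ} {m : ℕ} (ha : ∀ j, 0 ≤ a j)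
    (hab : ∀ j ≤ m, a j ≤ b j) (hD : ∀ n ≤ m, 0 ≤ D n) :
    weightedDiffSum a D m ≤ weightedDiffSum b D m := by
  refine sum_le_sum fun n hn => ?_
  have hn : n ≤ m := Nat.lt_succ_iff.mp (mem_range.mp hn)
  refine mul_le_mul_of_nonneg_left (add_le_add ?_ (hab _ (by omega))) (hD n hn)
  rcases Nat.eq_zero_or_pos (m - n) with hmn | hmn
  · simp [hmn]
  · exact pow_le_pow_left₀ (ha 1) (hab 1 (by omega)) _

theorem le_max_of_forall_sq_le_mul {b : ℕ → ℝ} (hb : ∀ j, 0 ≤ b j) {p q : ℕ}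
    (hconv : ∀ j, p ≤ j → j + 2 ≤ q → b (j + 1) ^ 2 ≤ b j * b (j + 2)) {j : ℕ}
    (hpj : p ≤ j) (hjq : j ≤ q) : b j ≤ max (b p) (b q) := by
  obtain ⟨n, rfl⟩ := Nat.exists_eq_add_of_le (hpj.trans hjq)
  induction n generalizing p j with
  | zero =>
    obtain rfl : j = p := by omega
    exact le_max_left _ _
  | succ n ih =>
    rcases hpj.eq_or_lt with rfl | hpj
    · exact le_max_left _ _
    have hconv' : ∀ i, p + 1 ≤ i → i + 2 ≤ p + 1 + n → b (i + 1) ^ 2 ≤ b i * b (i + 2) :=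
      fun i hi hin => hconv i (by omega) (by omega)
    have hq : p + 1 + n = p + (n + 1) := by omega
    -- A strict maximum at `p + 1` would force `b (p + 2) > b (p + 1)`.
    have hnext : b (p + 1) ≤ max (b p) (b (p + (n + 1))) := by
      rcases n with _ | n
      · exact le_max_right _ _
      by_contra! hlt
      have h₂ := ih (hconv := hconv') (j := p + 2) (by omega) (by omega)
      rw [hq, max_eq_left (le_max_right _ _ |>.trans hlt.le)] at h₂
      have h₃ := hconv p le_rfl (by omega)
      have := hb p
      nlinarith [le_max_left (b p) (b (p + (n + 1 + 1))), le_max_right (b p) (b (p + (n + 1 + 1)))]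
    calc b j ≤ max (b (p + 1)) (b (p + 1 + n)) := ih (hconv := hconv') (by omega) (by omega)
      _ ≤ max (b p) (b (p + (n + 1))) := max_le hnext (hq ▸ le_max_right _ _)

namespace LogConvexUpTo

variable {c : ℝ} {a : ℕ → ℝ} {K : ℕ}

theorem mono (h : LogConvexUpTo c a K) {K' : ℕ} (hK : K' ≤ K) : LogConvexUpTo c a K' :=
  fun j hj hjK => h j hj (hjK.trans hK)

theorem mul_pow_le_max (h : LogConvexUpTo c a K) (ha : ∀ j, 0 ≤ a j) (hc : 0 ≤ c) {s : ℝ}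
    (hs : 0 < s) {j : ℕ} (hj : 1 ≤ j) (hjK : j ≤ K) :
    a j * c ^ j.choose 2 * s ^ j ≤ max (a 1 * s) (a K * c ^ K.choose 2 * s ^ K) := by
  -- The weights `c ^ (i choose 2)` absorb the factor `c`, since `(i choose 2) + (i + 2 choose 2)`
  -- exceeds `2 * (i + 1 choose 2)` by one.
  have hconv : ∀ i, 1 ≤ i → i + 2 ≤ K →
      (a (i + 1) * c ^ (i + 1).choose 2 * s ^ (i + 1)) ^ 2 ≤
        (a i * c ^ i.choose 2 * s ^ i) * (a (i + 2) * c ^ (i + 2).choose 2 * s ^ (i + 2)) := by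
    intro i hi hiK
    have e₁ : (i + 1).choose 2 = i.choose 2 + i := by
      rw [Nat.choose_succ_succ', Nat.choose_one_right, add_comm]
    have e₂ : (i + 2).choose 2 = i.choose 2 + 2 * i + 1 := by
      rw [Nat.choose_succ_succ', e₁, Nat.choose_one_right]
      ring
    rw [e₁, e₂]
    calc _ = a (i + 1) ^ 2 * (c ^ (i.choose 2 + i) * s ^ (i + 1)) ^ 2 := by ring
      _ ≤ c * (a i * a (i + 2)) * (c ^ (i.choose 2 + i) * s ^ (i + 1)) ^ 2 := by
        gcongr
        exact h i hi hiK
      _ = _ := by ring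
  simpa using le_max_of_forall_sq_le_mul (b := fun i => a i * c ^ i.choose 2 * s ^ i)
    (fun i => by have := ha i; positivity) hconv hj hjK

theorem le_mul_pow {t : ℝ} (h : LogConvexUpTo c a K) (ha : ∀ j, 0 ≤ a j) (hc : 1 ≤ c)
    (ht : 0 ≤ t) (h₁ : a 1 ≤ t) (hK : a K ≤ t ^ K) {j : ℕ} (hj : 1 ≤ j) (hjK : j ≤ K) :
    a j ≤ c ^ K.choose 2 * t ^ j := by
  have hcj : 1 ≤ c ^ j.choose 2 := one_le_pow₀ hc
  have hcK : 1 ≤ c ^ K.choose 2 := one_le_pow₀ hc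
  rcases ht.eq_or_lt with rfl | ht
  · have hK₀ : a K ≤ 0 := by simpa [zero_pow (by omega : K ≠ 0)] using hK
    have hmax : max (a 1) (a K * c ^ K.choose 2) ≤ 0 :=
      max_le h₁ (mul_nonpos_of_nonpos_of_nonneg hK₀ (by positivity))
    have := h.mul_pow_le_max ha (by linarith) one_pos hj hjK
    simp only [one_pow, mul_one] at this
    rw [zero_pow (by omega), mul_zero]
    nlinarith [ha j]
  · have hmax : max (a 1 * t⁻¹) (a K * c ^ K.choose 2 * t⁻¹ ^ K) ≤ c ^ K.choose 2 := by
      refine max_le ?_ ?_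
      · rw [← div_eq_mul_inv, div_le_iff₀ ht]
        nlinarith
      · rw [inv_pow, ← div_eq_mul_inv, div_le_iff₀ (by positivity), mul_comm]
        exact mul_le_mul_of_nonneg_left hK (by positivity)
    have := (h.mul_pow_le_max ha (by linarith) (inv_pos.mpr ht) hj hjK).trans hmax
    rw [inv_pow, ← div_eq_mul_inv, div_le_iff₀ (by positivity)] at this
    calc a j ≤ a j * c ^ j.choose 2 := le_mul_of_one_le_right (ha j) hcj
      _ ≤ _ := this

theorem exists_scale (h : LogConvexUpTo c a K) (ha : ∀ j, 0 ≤ a j) (hc : 1 ≤ c) {k : ℕ}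
    (hk : k ≠ 0) (hkK : k ≤ K) :
    ∃ t, 0 ≤ t ∧ a 1 ≤ t ∧ t ^ k = a 1 ^ k + a k ∧
      ∀ j, 1 ≤ j → j ≤ k → a j ≤ c ^ K.choose 2 * t ^ j := by
  have hT : 0 ≤ a 1 ^ k + a k := add_nonneg (pow_nonneg (ha 1) k) (ha k)
  set t := (a 1 ^ k + a k) ^ (k⁻¹ : ℝ)
  have ht : 0 ≤ t := by positivity
  have htk : t ^ k = a 1 ^ k + a k := Real.rpow_inv_natCast_pow hT hk
  have h₁ : a 1 ≤ t :=
    (pow_le_pow_iff_left₀ (ha 1) ht hk).mp (htk ▸ le_add_of_nonneg_right (ha k))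
  refine ⟨t, ht, h₁, htk, fun j hj hjk => ?_⟩
  calc a j ≤ c ^ k.choose 2 * t ^ j :=
        (h.mono hkK).le_mul_pow ha hc ht h₁ (htk ▸ le_add_of_nonneg_left (pow_nonneg (ha 1) k))
          hj hjk
    _ ≤ c ^ K.choose 2 * t ^ j :=
        mul_le_mul_of_nonneg_right (pow_le_pow_right₀ hc (Nat.choose_le_choose 2 hkK))
          (pow_nonneg ht j)

theorem add_mul_le (h : LogConvexUpTo c a K) (ha : ∀ j, 0 ≤ a j) (ha₀ : a 0 = 0) (hc : 1 ≤ c)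
    {p q : ℕ} (hq : 1 ≤ q) (hpq : p + q ≤ K) :
    (a 1 ^ p + a p) * a q ≤ 2 * (c ^ K.choose 2) ^ 2 * (a 1 ^ (p + q) + a (p + q)) := by
  obtain ⟨t, ht, h₁, htk, hscale⟩ := h.exists_scale ha hc (by omega : p + q ≠ 0) hpq
  set C := c ^ K.choose 2
  have hC : 1 ≤ C := one_le_pow₀ hc
  have hap : a p ≤ C * t ^ p := by
    rcases Nat.eq_zero_or_pos p with rfl | hp
    · simp [ha₀]
      linarith
    · exact hscale p hp (by omega)
  have hp : a 1 ^ p + a p ≤ 2 * C * t ^ p := by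
    nlinarith [pow_le_pow_left₀ (ha 1) h₁ p, pow_nonneg ht p]
  calc (a 1 ^ p + a p) * a q ≤ (2 * C * t ^ p) * (C * t ^ q) :=
        mul_le_mul hp (hscale q hq (by omega)) (ha q) (by positivity)
    _ = 2 * C ^ 2 * t ^ (p + q) := by ring
    _ = _ := by rw [htk]

theorem weightedDiffSum_mul_le (h : LogConvexUpTo c a K) (ha : ∀ j, 0 ≤ a j) (ha₀ : a 0 = 0)
    (hc : 1 ≤ c) {D : ℕ → ℝ} {l k : ℕ} (hD : ∀ n ≤ k, 0 ≤ D n) (hlk : l < k) (hkK : k ≤ K) :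
    weightedDiffSum a D l * a (k - l) ≤ 2 * (c ^ K.choose 2) ^ 2 * weightedDiffSum a D k := by
  set P := 2 * (c ^ K.choose 2) ^ 2
  rw [weightedDiffSum, weightedDiffSum, sum_mul, mul_sum]
  calc ∑ n ∈ range (l + 1), D n * (a 1 ^ (l - n) + a (l - n)) * a (k - l)
      ≤ ∑ n ∈ range (l + 1), P * (D n * (a 1 ^ (k - n) + a (k - n))) := by
        refine sum_le_sum fun n hn => ?_
        have hn : n ≤ l := Nat.lt_succ_iff.mp (mem_range.mp hn)
        have hprod := h.add_mul_le ha ha₀ hc (p := l - n) (q := k - l) (by omega) (by omega)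
        rw [show l - n + (k - l) = k - n by omega] at hprod
        calc _ = D n * ((a 1 ^ (l - n) + a (l - n)) * a (k - l)) := by ring
          _ ≤ D n * (P * (a 1 ^ (k - n) + a (k - n))) :=
            mul_le_mul_of_nonneg_left hprod (hD n (by omega))
          _ = _ := by ring
    _ ≤ ∑ n ∈ range (k + 1), P * (D n * (a 1 ^ (k - n) + a (k - n))) := by
        refine sum_le_sum_of_subset_of_nonneg (range_subset_range.mpr (by omega)) fun n hn _ => ?_
        have := hD n (Nat.lt_succ_iff.mp (mem_range.mp hn))
        have := ha 1
        have := ha (k - n)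
        positivity

end LogConvexUpTo

/-- One Leibniz expansion for each of the two terms of `fderiv_comp_sub_comp`. -/
def compSubCompConst (C : ℝ) : ℕ → ℝ
  | 0 => 1
  | m + 1 => 2 ^ m * (2 * C ^ 2 * compSubCompConst C m + m ! * C ^ m)

theorem compSubCompConst_le_succ {C : ℝ} (hC : 1 ≤ C) {m : ℕ}
    (hm : 0 ≤ compSubCompConst C m) : compSubCompConst C m ≤ compSubCompConst C (m + 1) := by
  have hC2 : 1 ≤ 2 * C ^ 2 := by nlinarith
  rw [compSubCompConst]
  calc compSubCompConst C m ≤ 2 * C ^ 2 * compSubCompConst C m + m ! * C ^ m := by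
        nlinarith [show (0 : ℝ) ≤ m ! * C ^ m by positivity]
    _ ≤ _ := le_mul_of_one_le_left (by positivity) (one_le_pow₀ (by norm_num))

theorem one_le_compSubCompConst {C : ℝ} (hC : 1 ≤ C) (m : ℕ) : 1 ≤ compSubCompConst C m := by
  induction m with
  | zero => rfl
  | succ m ih => exact ih.trans (compSubCompConst_le_succ hC (zero_le_one.trans ih))

theorem compSubCompConst_mono {C : ℝ} (hC : 1 ≤ C) : Monotone (compSubCompConst C) :=
  monotone_nat_of_le_succ fun m =>
    compSubCompConst_le_succ hC (zero_le_one.trans (one_le_compSubCompConst hC m))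

theorem sq_le_of_forall_mul_le {y A B : ℝ} (h : ∀ s, s * y ≤ A + B * s ^ 2) :
    y ^ 2 ≤ 4 * A * B := by
  have := discrim_le_zero (a := B) (b := -y) (c := A) fun s => by nlinarith [h s]
  rw [discrim] at this
  linarith

section

variable {E F : Type*} [NormedAddCommGroup E] [NormedSpace ℝ E] [NormedAddCommGroup F]
  [NormedSpace ℝ F]

theorem norm_fderiv_le_sqrt_of_lipschitzWith {f : E → F} {A : ℝ} {K : ℝ≥0}
    (hf : Differentiable ℝ f) (hA : ∀ x, ‖f x‖ ≤ A) (hK : LipschitzWith K (fderiv ℝ f))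
    (x : E) : ‖fderiv ℝ f x‖ ≤ √(8 * A * K) := by
  have htaylor : ∀ v, ‖f (x + v) - f x - fderiv ℝ f x v‖ ≤ K * ‖v‖ * ‖v‖ := by
    intro v
    have hmem : x + v ∈ Metric.closedBall x ‖v‖ := by simp
    simpa using (convex_closedBall x ‖v‖).norm_image_sub_le_of_norm_fderiv_le'
      (fun z _ => hf z)
      (fun z hz => (hK.norm_sub_le z x).trans (by gcongr; exact mem_closedBall_iff_norm.mp hz))
      (Metric.mem_closedBall_self (norm_nonneg v)) hmem
  refine ContinuousLinearMap.opNorm_le_bound _ (Real.sqrt_nonneg _) fun w => ?_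
  have hquad : ∀ s : ℝ, s * ‖fderiv ℝ f x w‖ ≤ 2 * A + K * ‖w‖ ^ 2 * s ^ 2 := by
    intro s
    have hsq : (K : ℝ) * ‖s • w‖ * ‖s • w‖ = K * ‖w‖ ^ 2 * s ^ 2 := by
      rw [norm_smul, Real.norm_eq_abs, ← sq_abs s]
      ring
    calc s * ‖fderiv ℝ f x w‖ ≤ ‖fderiv ℝ f x (s • w)‖ := by
          rw [map_smul, norm_smul, Real.norm_eq_abs]
          exact mul_le_mul_of_nonneg_right (le_abs_self s) (norm_nonneg _)
      _ ≤ ‖f (x + s • w) - f x‖ + ‖f (x + s • w) - f x - fderiv ℝ f x (s • w)‖ :=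
          norm_le_norm_add_norm_sub _ _
      _ ≤ (‖f (x + s • w)‖ + ‖f x‖) + K * ‖s • w‖ * ‖s • w‖ :=
          add_le_add (norm_sub_le _ _) (htaylor _)
      _ ≤ 2 * A + K * ‖w‖ ^ 2 * s ^ 2 := by linarith [hA (x + s • w), hA x]
  calc ‖fderiv ℝ f x w‖ ≤ √(4 * (2 * A) * (K * ‖w‖ ^ 2)) :=
        Real.le_sqrt_of_sq_le (sq_le_of_forall_mul_le hquad)
    _ = √(8 * A * K) * ‖w‖ := by
        rw [show 4 * (2 * A) * (K * ‖w‖ ^ 2) = 8 * A * K * ‖w‖ ^ 2 by ring,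
          Real.sqrt_mul' _ (sq_nonneg _), Real.sqrt_sq (norm_nonneg _)]

theorem norm_iteratedFDeriv_succ_le_sqrt {h : E → F} {n : ℕ} {A B : ℝ}
    (hh : ContDiff ℝ (n + 2) h) (hA : ∀ x, ‖iteratedFDeriv ℝ n h x‖ ≤ A)
    (hB : ∀ x, ‖iteratedFDeriv ℝ (n + 2) h x‖ ≤ B) (x : E) :
    ‖iteratedFDeriv ℝ (n + 1) h x‖ ≤ √(8 * A * B) := by
  have hB₀ : 0 ≤ B := (norm_nonneg _).trans (hB x)
  have hlip : LipschitzWith B.toNNReal (fderiv ℝ (iteratedFDeriv ℝ n h)) := by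
    have hcurry : fderiv ℝ (iteratedFDeriv ℝ n h) =
        continuousMultilinearCurryLeftEquiv ℝ (fun _ : Fin (n + 1) => E) F ∘
          iteratedFDeriv ℝ (n + 1) h := by
      rw [iteratedFDeriv_succ_eq_comp_left]
      ext1 y
      simp
    have hsucc : LipschitzWith B.toNNReal (iteratedFDeriv ℝ (n + 1) h) :=
      lipschitzWith_of_nnnorm_fderiv_le
        (hh.differentiable_iteratedFDeriv (by norm_cast; omega)) fun y => by
          rw [Real.le_toNNReal_iff_coe_le hB₀, coe_nnnorm, norm_fderiv_iteratedFDeriv]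
          exact hB y
    rw [hcurry]
    simpa only [one_mul] using
      (continuousMultilinearCurryLeftEquiv ℝ (fun _ : Fin (n + 1) => E) F).isometry.lipschitz.comp
        hsucc
  rw [← norm_fderiv_iteratedFDeriv, ← Real.coe_toNNReal B hB₀]
  exact norm_fderiv_le_sqrt_of_lipschitzWith
    (hh.differentiable_iteratedFDeriv (by norm_cast; omega)) hA hlip x

theorem exists_logConvexUpTo_of_norm_iteratedFDeriv_le {g₁ g₂ : E → F} {m : ℕ} {M : ℕ → ℝ}
    (hg₁ : ContDiff ℝ m g₁) (hg₂ : ContDiff ℝ m g₂)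
    (hM : ∀ j ≤ m, ∀ x, ‖iteratedFDeriv ℝ j g₁ x‖ ≤ M j ∧ ‖iteratedFDeriv ℝ j g₂ x‖ ≤ M j) :
    ∃ a : ℕ → ℝ, (∀ j, 0 ≤ a j) ∧ a 0 = 0 ∧ LogConvexUpTo 8 a m ∧ (∀ j ≤ m, a j ≤ M j) ∧
      ∀ j, 1 ≤ j → j ≤ m → ∀ x,
        ‖iteratedFDeriv ℝ j g₁ x‖ ≤ a j ∧ ‖iteratedFDeriv ℝ j g₂ x‖ ≤ a j := by
  set s : ℕ → ℝ := fun j => ⨆ x, max ‖iteratedFDeriv ℝ j g₁ x‖ ‖iteratedFDeriv ℝ j g₂ x‖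
  have hs : ∀ j ≤ m, ∀ x, ‖iteratedFDeriv ℝ j g₁ x‖ ≤ s j ∧ ‖iteratedFDeriv ℝ j g₂ x‖ ≤ s j := by
    intro j hj x
    have hbdd : BddAbove (range fun x => max ‖iteratedFDeriv ℝ j g₁ x‖ ‖iteratedFDeriv ℝ j g₂ x‖) :=
      ⟨M j, by rintro _ ⟨y, rfl⟩; exact max_le (hM j hj y).1 (hM j hj y).2⟩
    exact max_le_iff.mp (le_ciSup hbdd x)
  have hs₀ : ∀ j, 0 ≤ s j := fun j =>
    Real.iSup_nonneg fun x => (norm_nonneg _).trans (le_max_left _ _)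
  refine ⟨fun j => if j = 0 then 0 else s j, fun j => ?_, if_pos rfl, fun j hj hjm => ?_,
    fun j hj => ?_, fun j hj hjm x => ?_⟩
  · dsimp only
    split_ifs
    exacts [le_rfl, hs₀ j]
  · simp only [show j ≠ 0 by omega, show j + 1 ≠ 0 by omega, show j + 2 ≠ 0 by omega, if_false]
    have hlandau : s (j + 1) ≤ √(8 * s j * s (j + 2)) := ciSup_le fun x => max_le
      (norm_iteratedFDeriv_succ_le_sqrt (hg₁.of_le (by exact_mod_cast hjm))
        (fun y => (hs j (by omega) y).1) (fun y => (hs (j + 2) hjm y).1) x)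
      (norm_iteratedFDeriv_succ_le_sqrt (hg₂.of_le (by exact_mod_cast hjm))
        (fun y => (hs j (by omega) y).2) (fun y => (hs (j + 2) hjm y).2) x)
    have := (Real.le_sqrt (hs₀ _) (by have := hs₀ j; have := hs₀ (j + 2); positivity)).mp hlandau
    linarith
  · dsimp only
    split_ifs with hj₀
    · exact hj₀ ▸ (norm_nonneg _).trans (hM 0 (Nat.zero_le m) 0).1
    · exact ciSup_le fun x => max_le (hM j hj x).1 (hM j hj x).2
  · simpa [show j ≠ 0 by omega] using hs j hjm x

theorem norm_iteratedFDeriv_smul_le_of_forall_le {f : E → ℝ} {g : E → F} {n : ℕ}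
    (hf : ContDiff ℝ n f) (hg : ContDiff ℝ n g) (x : E) {R : ℝ}
    (hR : ∀ l ≤ n, ‖iteratedFDeriv ℝ l f x‖ * ‖iteratedFDeriv ℝ (n - l) g x‖ ≤ R) :
    ‖iteratedFDeriv ℝ n (fun y => f y • g y) x‖ ≤ 2 ^ n * R :=
  calc _ ≤ ∑ l ∈ range (n + 1),
        (n.choose l : ℝ) * ‖iteratedFDeriv ℝ l f x‖ * ‖iteratedFDeriv ℝ (n - l) g x‖ :=
        norm_iteratedFDeriv_smul_le hf hg x le_rfl
    _ ≤ ∑ l ∈ range (n + 1), (n.choose l : ℝ) * R := sum_le_sum fun l hl => by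
        rw [mul_assoc]
        exact mul_le_mul_of_nonneg_left (hR l (Nat.lt_succ_iff.mp (mem_range.mp hl)))
          (Nat.cast_nonneg _)
    _ = 2 ^ n * R := by
        rw [← sum_mul, ← Nat.cast_sum, Nat.sum_range_choose]
        push_cast
        ring

theorem fderiv_comp_sub_comp {f : ℝ → ℝ} {g₁ g₂ : E → ℝ} (hf : Differentiable ℝ f)
    (hg₁ : Differentiable ℝ g₁) (hg₂ : Differentiable ℝ g₂) :
    fderiv ℝ (fun y => f (g₁ y) - f (g₂ y)) = fun y =>
      (deriv f (g₁ y) - deriv f (g₂ y)) • fderiv ℝ g₁ y +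
        deriv f (g₂ y) • fderiv ℝ (fun y => g₁ y - g₂ y) y := by
  ext1 y
  have h₁ : HasFDerivAt (fun y => f (g₁ y)) (deriv f (g₁ y) • fderiv ℝ g₁ y) y :=
    (hf (g₁ y)).hasDerivAt.comp_hasFDerivAt y (hg₁ y).hasFDerivAt
  have h₂ : HasFDerivAt (fun y => f (g₂ y)) (deriv f (g₂ y) • fderiv ℝ g₂ y) y :=
    (hf (g₂ y)).hasDerivAt.comp_hasFDerivAt y (hg₂ y).hasFDerivAt
  rw [(h₁.fun_sub h₂).fderiv, fderiv_fun_sub (hg₁ y) (hg₂ y)]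
  module

namespace LogConvexUpTo

variable {c : ℝ} {a D : ℕ → ℝ} {K m : ℕ}

theorem norm_iteratedFDeriv_comp_le (h : LogConvexUpTo c a K) (ha : ∀ j, 0 ≤ a j) (hc : 1 ≤ c)
    (hmK : m ≤ K) {u : ℝ → ℝ} {g : E → ℝ} (hu : ContDiff ℝ m u) (hg : ContDiff ℝ m g)
    (hub : ∀ i ≤ m, ∀ t, |iteratedDeriv i u t| ≤ 1) {x : E}
    (hgb : ∀ j, 1 ≤ j → j ≤ m → ‖iteratedFDeriv ℝ j g x‖ ≤ a j) :
    ‖iteratedFDeriv ℝ m (fun y => u (g y)) x‖ ≤ m ! * (c ^ K.choose 2) ^ m * (a 1 ^ m + a m) := by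
  rcases Nat.eq_zero_or_pos m with rfl | hm
  · simpa using (hub 0 le_rfl (g x)).trans (le_add_of_nonneg_right (ha 0))
  obtain ⟨t, ht, -, htm, hscale⟩ := h.exists_scale ha hc hm.ne' hmK
  set C := c ^ K.choose 2
  have hC : 1 ≤ C := one_le_pow₀ hc
  have hgD : ∀ j, 1 ≤ j → j ≤ m → ‖iteratedFDeriv ℝ j g x‖ ≤ (C * t) ^ j := fun j hj hjm =>
    calc ‖iteratedFDeriv ℝ j g x‖ ≤ C * t ^ j := (hgb j hj hjm).trans (hscale j hj hjm)
      _ ≤ C ^ j * t ^ j := by gcongr; exact le_self_pow₀ hC (by omega)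
      _ = (C * t) ^ j := (mul_pow C t j).symm
  calc ‖iteratedFDeriv ℝ m (u ∘ g) x‖ ≤ m ! * 1 * (C * t) ^ m :=
        _root_.norm_iteratedFDeriv_comp_le hu hg le_rfl x (fun i hi => by
          rw [norm_iteratedFDeriv_eq_norm_iteratedDeriv, Real.norm_eq_abs]
          exact hub i hi _) hgD
    _ = m ! * C ^ m * (a 1 ^ m + a m) := by rw [mul_pow, htm]; ring

theorem norm_iteratedFDeriv_comp_smul_fderiv_le (h : LogConvexUpTo c a K) (ha : ∀ j, 0 ≤ a j)
    (hc : 1 ≤ c) (hmK : m + 1 ≤ K) {u : ℝ → ℝ} {g δ : E → ℝ} (hu : ContDiff ℝ m u)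
    (hg : ContDiff ℝ m g) (hδ : ContDiff ℝ (m + 1) δ)
    (hub : ∀ i ≤ m, ∀ t, |iteratedDeriv i u t| ≤ 1) {x : E} (hgb : ∀ j, 1 ≤ j → j ≤ m → ‖iteratedFDeriv ℝ j g x‖ ≤ a j)
    (hD : ∀ n ≤ m + 1, ‖iteratedFDeriv ℝ n δ x‖ ≤ D n) :
    ‖iteratedFDeriv ℝ m (fun y => u (g y) • fderiv ℝ δ y) x‖ ≤
      2 ^ m * (m ! * (c ^ K.choose 2) ^ m * weightedDiffSum a D (m + 1)) := by
  set C := c ^ K.choose 2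
  have hC : 1 ≤ C := one_le_pow₀ hc
  have hD₀ : ∀ n ≤ m + 1, 0 ≤ D n := fun n hn => (norm_nonneg _).trans (hD n hn)
  refine norm_iteratedFDeriv_smul_le_of_forall_le (hu.comp hg) (hδ.fderiv_right le_rfl) x
    fun l hl => ?_
  have hcomp := h.norm_iteratedFDeriv_comp_le (m := l) ha hc (by omega)
    (hu.of_le (by exact_mod_cast hl)) (hg.of_le (by exact_mod_cast hl))
    (fun i hi => hub i (by omega)) (fun j hj hjl => hgb j hj (by omega))
  have hconst : (l ! : ℝ) * C ^ l ≤ m ! * C ^ m :=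
    mul_le_mul (by exact_mod_cast Nat.factorial_le hl) (pow_le_pow_right₀ hC hl) (by positivity)
      (by positivity)
  have hδl : ‖iteratedFDeriv ℝ (m - l) (fderiv ℝ δ) x‖ ≤ D (m + 1 - l) := by
    rw [norm_iteratedFDeriv_fderiv, show m - l + 1 = m + 1 - l by omega]
    exact hD _ (by omega)
  have hterm : (a 1 ^ l + a l) * D (m + 1 - l) ≤ weightedDiffSum a D (m + 1) := by
    have := single_le_sum (f := fun n => D n * (a 1 ^ (m + 1 - n) + a (m + 1 - n)))
      (fun n hn => mul_nonneg (hD₀ n (by simp at hn; omega))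
        (add_nonneg (pow_nonneg (ha 1) _) (ha _)))
      (mem_range.mpr (by omega : m + 1 - l < m + 1 + 1))
    rw [show m + 1 - (m + 1 - l) = l by omega] at this
    rw [weightedDiffSum]
    linarith [mul_comm (a 1 ^ l + a l) (D (m + 1 - l))]
  have hw : 0 ≤ a 1 ^ l + a l := add_nonneg (pow_nonneg (ha 1) _) (ha l)
  calc ‖iteratedFDeriv ℝ l (fun y => u (g y)) x‖ * ‖iteratedFDeriv ℝ (m - l) (fderiv ℝ δ) x‖
      ≤ (m ! * C ^ m * (a 1 ^ l + a l)) * D (m + 1 - l) :=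
        mul_le_mul (hcomp.trans (by gcongr)) hδl (norm_nonneg _) (by positivity)
    _ = m ! * C ^ m * ((a 1 ^ l + a l) * D (m + 1 - l)) := by ring
    _ ≤ _ := by gcongr

theorem norm_iteratedFDeriv_smul_fderiv_le (h : LogConvexUpTo c a K) (ha : ∀ j, 0 ≤ a j)
    (ha₀ : a 0 = 0) (hc : 1 ≤ c) (hmK : m + 1 ≤ K) {v g : E → ℝ} (hv : ContDiff ℝ m v)
    (hg : ContDiff ℝ (m + 1) g) {x : E}
    (hgb : ∀ j, 1 ≤ j → j ≤ m + 1 → ‖iteratedFDeriv ℝ j g x‖ ≤ a j) (hD : ∀ n ≤ m + 1, 0 ≤ D n)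
    {d : ℝ} (hd : 0 ≤ d) (hvb : ∀ l ≤ m, ‖iteratedFDeriv ℝ l v x‖ ≤ d * weightedDiffSum a D l) :
    ‖iteratedFDeriv ℝ m (fun y => v y • fderiv ℝ g y) x‖ ≤
      2 ^ m * (d * (2 * (c ^ K.choose 2) ^ 2 * weightedDiffSum a D (m + 1))) := by
  refine norm_iteratedFDeriv_smul_le_of_forall_le hv (hg.fderiv_right le_rfl) x fun l hl => ?_
  have hgl : ‖iteratedFDeriv ℝ (m - l) (fderiv ℝ g) x‖ ≤ a (m + 1 - l) := by
    rw [norm_iteratedFDeriv_fderiv, show m - l + 1 = m + 1 - l by omega]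
    exact hgb _ (by omega) (by omega)
  have hS := weightedDiffSum_nonneg (m := l) ha fun n hn => hD n (by omega)
  calc _ ≤ d * weightedDiffSum a D l * a (m + 1 - l) :=
        mul_le_mul (hvb l hl) hgl (norm_nonneg _) (mul_nonneg hd hS)
    _ = d * (weightedDiffSum a D l * a (m + 1 - l)) := mul_assoc _ _ _
    _ ≤ _ := mul_le_mul_of_nonneg_left (h.weightedDiffSum_mul_le ha ha₀ hc hD (by omega) hmK) hd

theorem norm_iteratedFDeriv_succ_comp_sub_comp_le (h : LogConvexUpTo c a K) (ha : ∀ j, 0 ≤ a j)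
    (ha₀ : a 0 = 0) (hc : 1 ≤ c) (hmK : m + 1 ≤ K) {f : ℝ → ℝ} (hf : ContDiff ℝ (m + 1 + 1) f)
    (hfb : ∀ k ≤ m + 1, ∀ t, |iteratedDeriv k (deriv f) t| ≤ 1) {g₁ g₂ : E → ℝ}
    (hg₁ : ContDiff ℝ (m + 1) g₁) (hg₂ : ContDiff ℝ (m + 1) g₂) {x : E}
    (hgb : ∀ j, 1 ≤ j → j ≤ m + 1 →
      ‖iteratedFDeriv ℝ j g₁ x‖ ≤ a j ∧ ‖iteratedFDeriv ℝ j g₂ x‖ ≤ a j)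
    (hD : ∀ n ≤ m + 1, ‖iteratedFDeriv ℝ n (fun y => g₁ y - g₂ y) x‖ ≤ D n) {d : ℝ} (hd : 0 ≤ d)
    (hind : ∀ l ≤ m, ‖iteratedFDeriv ℝ l (fun y => deriv f (g₁ y) - deriv f (g₂ y)) x‖ ≤
      d * weightedDiffSum a D l) :
    ‖iteratedFDeriv ℝ (m + 1) (fun y => f (g₁ y) - f (g₂ y)) x‖ ≤
      2 ^ m * (2 * (c ^ K.choose 2) ^ 2 * d + m ! * (c ^ K.choose 2) ^ m) *
        weightedDiffSum a D (m + 1) := by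
  have hf' : ContDiff ℝ m (deriv f) :=
    (contDiff_succ_iff_deriv.mp hf).2.2.of_le (by norm_cast; exact m.le_succ)
  have hgm₁ : ContDiff ℝ m g₁ := hg₁.of_le (by exact_mod_cast m.le_succ)
  have hgm₂ : ContDiff ℝ m g₂ := hg₂.of_le (by exact_mod_cast m.le_succ)
  have hT₁ : ContDiff ℝ m (fun y => (deriv f (g₁ y) - deriv f (g₂ y)) • fderiv ℝ g₁ y) :=
    ((hf'.comp hgm₁).sub (hf'.comp hgm₂)).smul (hg₁.fderiv_right le_rfl)
  have hT₂ : ContDiff ℝ m (fun y => deriv f (g₂ y) • fderiv ℝ (fun y => g₁ y - g₂ y) y) :=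
    (hf'.comp hgm₂).smul ((hg₁.sub hg₂).fderiv_right le_rfl)
  have hterm₁ := h.norm_iteratedFDeriv_smul_fderiv_le ha ha₀ hc hmK
    ((hf'.comp hgm₁).sub (hf'.comp hgm₂)) hg₁ (fun j hj hjm => (hgb j hj hjm).1)
    (fun n hn => (norm_nonneg _).trans (hD n hn)) hd hind
  have hterm₂ := h.norm_iteratedFDeriv_comp_smul_fderiv_le ha hc hmK hf' hgm₂ (hg₁.sub hg₂)
    (fun i hi t => hfb i (by omega) t) (fun j hj hjm => (hgb j hj (by omega)).2) hD
  rw [← norm_iteratedFDeriv_fderiv, fderiv_comp_sub_comp (hf.differentiable (by simp))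
    (hg₁.differentiable (by simp)) (hg₂.differentiable (by simp)),
    fun_iteratedFDeriv_add_apply hT₁.contDiffAt hT₂.contDiffAt]
  calc _ ≤ _ := norm_add_le _ _
    _ ≤ _ := add_le_add hterm₁ hterm₂
    _ = _ := by ring

theorem norm_iteratedFDeriv_comp_sub_comp_le (h : LogConvexUpTo c a K) (ha : ∀ j, 0 ≤ a j)
    (ha₀ : a 0 = 0) (hc : 1 ≤ c) (hmK : m ≤ K) {f : ℝ → ℝ} (hf : ContDiff ℝ (m + 1) f)
    (hfb : ∀ k, 1 ≤ k → k ≤ m + 1 → ∀ t, |iteratedDeriv k f t| ≤ 1) {g₁ g₂ : E → ℝ}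
    (hg₁ : ContDiff ℝ m g₁) (hg₂ : ContDiff ℝ m g₂) {x : E}
    (hgb : ∀ j, 1 ≤ j → j ≤ m → ‖iteratedFDeriv ℝ j g₁ x‖ ≤ a j ∧ ‖iteratedFDeriv ℝ j g₂ x‖ ≤ a j)
    (hD : ∀ n ≤ m, ‖iteratedFDeriv ℝ n (fun y => g₁ y - g₂ y) x‖ ≤ D n) :
    ‖iteratedFDeriv ℝ m (fun y => f (g₁ y) - f (g₂ y)) x‖ ≤
      compSubCompConst (c ^ K.choose 2) m * weightedDiffSum a D m := by
  induction m using Nat.strong_induction_on generalizing f with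
  | _ m ih =>
  rcases m with _ | m
  · have hlip := convex_univ.norm_image_sub_le_of_norm_deriv_le
      (fun t _ => (hf.differentiable (by simp)).differentiableAt (x := t))
      (fun t _ => by rw [Real.norm_eq_abs, ← iteratedDeriv_one]; exact hfb 1 le_rfl le_rfl t)
      (mem_univ (g₂ x)) (mem_univ (g₁ x))
    have hD₀ := hD 0 le_rfl
    simp only [norm_iteratedFDeriv_zero] at hD₀ ⊢
    simpa [compSubCompConst, weightedDiffSum, ha₀] using hlip.trans (by linarith)
  have hC : 1 ≤ c ^ K.choose 2 := one_le_pow₀ hc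
  have hf' : ContDiff ℝ (m + 1) (deriv f) := (contDiff_succ_iff_deriv.mp hf).2.2
  have hf'b : ∀ k ≤ m + 1, ∀ t, |iteratedDeriv k (deriv f) t| ≤ 1 := fun k hk t => by
    rw [← iteratedDeriv_succ']
    exact hfb (k + 1) (by omega) (by omega) t
  rw [compSubCompConst]
  refine h.norm_iteratedFDeriv_succ_comp_sub_comp_le ha ha₀ hc hmK (by exact_mod_cast hf) hf'b
    hg₁ hg₂ hgb hD (zero_le_one.trans (one_le_compSubCompConst hC m)) fun l hl => ?_
  refine (ih l (by omega) (by omega) (hf'.of_le (by exact_mod_cast Nat.succ_le_succ hl))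
    (fun k _ hkl t => hf'b k (by omega) t) (hg₁.of_le (by exact_mod_cast hl.trans m.le_succ))
    (hg₂.of_le (by exact_mod_cast hl.trans m.le_succ)) (fun j hj hjl => hgb j hj (by omega))
    (fun n hn => hD n (by omega))).trans ?_
  exact mul_le_mul_of_nonneg_right (compSubCompConst_mono hC hl)
    (weightedDiffSum_nonneg ha fun n hn => (norm_nonneg _).trans (hD n (by omega)))

end LogConvexUpTo

end

theorem composition_difference_derivative_bound_general
    (d m : ℕ) :
    ∃ C : ℝ, 0 < C ∧
      ∀ (f : ℝ → ℝ) (c : ℕ → ℝ),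
        ContDiff ℝ (m + 2) f →
        (∀ k ∈ Finset.Icc 1 (m + 2), ∀ x : ℝ, |iteratedDeriv k f x| ≤ c k) →
        (∑ k ∈ Finset.Icc 1 (m + 2), c k) ≤ 1 →
        ∀ (g₁ g₂ : EuclideanSpace ℝ (Fin d) → ℝ) (M D : ℕ → ℝ),
          ContDiff ℝ m g₁ → ContDiff ℝ m g₂ →
          (∀ j ≤ m, ∀ x,
            ‖iteratedFDeriv ℝ j g₁ x‖ ≤ M j ∧ ‖iteratedFDeriv ℝ j g₂ x‖ ≤ M j) →
          (∀ n ≤ m, ∀ x, ‖iteratedFDeriv ℝ n (fun y => g₁ y - g₂ y) x‖ ≤ D n) →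
          ∀ x, ‖iteratedFDeriv ℝ m (fun y => f (g₁ y) - f (g₂ y)) x‖ ≤
              C * ∑ n ∈ Finset.range (m + 1), D n * (M 1 ^ (m - n) + M (m - n)) := by
  have hC : (1 : ℝ) ≤ 8 ^ m.choose 2 := one_le_pow₀ (by norm_num)
  refine ⟨compSubCompConst (8 ^ m.choose 2) m,
    zero_lt_one.trans_le (one_le_compSubCompConst hC m), ?_⟩
  intro f c hf hfc hc g₁ g₂ M D hg₁ hg₂ hM hD x
  obtain ⟨a, ha, ha₀, hlc, haM, hga⟩ := exists_logConvexUpTo_of_norm_iteratedFDeriv_le hg₁ hg₂ hM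
  have hfb : ∀ k, 1 ≤ k → k ≤ m + 1 → ∀ t, |iteratedDeriv k f t| ≤ 1 := fun k hk hkm t =>
    (hfc k (mem_Icc.mpr ⟨hk, by omega⟩) t).trans <| (single_le_sum
      (fun i hi => (abs_nonneg _).trans (hfc i hi 0)) (mem_Icc.mpr ⟨hk, by omega⟩)).trans hc
  have hD₀ : ∀ n ≤ m, 0 ≤ D n := fun n hn => (norm_nonneg _).trans (hD n hn x)
  calc _ ≤ compSubCompConst (8 ^ m.choose 2) m * weightedDiffSum a D m :=
        hlc.norm_iteratedFDeriv_comp_sub_comp_le ha ha₀ (by norm_num) le_rfl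
          (hf.of_le (by exact_mod_cast (by omega : m + 1 ≤ m + 2))) hfb hg₁ hg₂
          (fun j hj hjm => hga j hj hjm x) (fun n hn => hD n hn x)
    _ ≤ compSubCompConst (8 ^ m.choose 2) m * weightedDiffSum M D m :=
        mul_le_mul_of_nonneg_left (weightedDiffSum_mono ha haM hD₀)
          (zero_le_one.trans (one_le_compSubCompConst hC m))

/-- Lipschitz-type bound on the `m`-th derivative of a difference of
compositions: `‖∇^m (f∘g₁ − f∘g₂)‖_∞ ≲ Σ_{n=0}^m ‖∇^n(g₁−g₂)‖_∞ (M₁^{m−n} + M_{m−n})`. -/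
theorem composition_difference_derivative_bound
    (d m : ℕ) (hd : 1 ≤ d) :
    ∃ C : ℝ, 0 < C ∧
      ∀ (f : ℝ → ℝ) (c : ℕ → ℝ),
        ContDiff ℝ (m + 2) f →
        (∀ k ∈ Finset.Icc 1 (m + 2), ∀ x : ℝ, |iteratedDeriv k f x| ≤ c k) →
        (∑ k ∈ Finset.Icc 1 (m + 2), c k) ≤ 1 →
        ∀ (g₁ g₂ : EuclideanSpace ℝ (Fin d) → ℝ) (M D : ℕ → ℝ),
          ContDiff ℝ m g₁ → ContDiff ℝ m g₂ →
          (∀ j ≤ m, ∀ x,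
            ‖iteratedFDeriv ℝ j g₁ x‖ ≤ M j ∧ ‖iteratedFDeriv ℝ j g₂ x‖ ≤ M j) →
          (∀ n ≤ m, ∀ x, ‖iteratedFDeriv ℝ n (fun y => g₁ y - g₂ y) x‖ ≤ D n) →
          ∀ x, ‖iteratedFDeriv ℝ m (fun y => f (g₁ y) - f (g₂ y)) x‖ ≤
              C * ∑ n ∈ Finset.range (m + 1), D n * (M 1 ^ (m - n) + M (m - n)) :=
  composition_difference_derivative_bound_general d m
end

section
/- Let d, N ≥ 1 be integers and ν ∈ (0, 1/2). Let f, g : ℝ^d → ℝ^N be functions with [g]_{Ċ^{1/2}} < ∞, [f]_{Ċ^{1/2+ν}} < ∞ and [f]_{Ċ^{1/2−ν}} < ∞. Then there is a constant C depending only on d and ν such that ∫_{ℝ^d} ( sup_x ‖δ_α f(x)‖ ) · ( sup_x ‖δ_α g(x)‖ ) · dα / |α|^{d+1} ≤ C [g]_{Ċ^{1/2}} · ( [f]_{Ċ^{1/2+ν}} )^{1/2} ( [f]_{Ċ^{1/2−ν}} )^{1/2}. -/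
/-!
With `r = ‖α‖` and `A`, `B` the `Ċ^{1/2+ν}` and `Ċ^{1/2-ν}` constants of `f`, the Hölder bounds give
`sup_x ‖δ_α g‖ ≤ [g] r^{1/2}` and `sup_x ‖δ_α f‖ ≤ min (A r^{1/2+ν}, B r^{1/2-ν})`, so in polar
coordinates the integral is at most `d |B₁| [g] ∫₀^∞ min (A r^{ν-1}, B r^{-ν-1}) dr`.
Splitting this at the radius `R` where `A R^ν = B R^{-ν} = √(AB)` bounds it by
`(A R^ν + B R^{-ν}) / ν = 2 √(AB) / ν`.
-/

open MeasureTheory Set Module Metric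

section Holder

variable {F : Type*} [SeminormedAddCommGroup F] {K s : ℝ}

lemma iSup_norm_sub_sub_le_of_norm_sub_le {E : Type*} [SeminormedAddCommGroup E] {f : E → F}
    (hf : ∀ x y, ‖f x - f y‖ ≤ K * ‖x - y‖ ^ s) (α : E) :
    ⨆ x, ‖f x - f (x - α)‖ ≤ K * ‖α‖ ^ s :=
  ciSup_le fun x => by simpa using hf x (x - α)

lemma nonneg_of_norm_sub_le_mul_rpow {E : Type*} [NormedAddCommGroup E] [Nontrivial E]
    {f : E → F} (hf : ∀ x y, ‖f x - f y‖ ≤ K * ‖x - y‖ ^ s) : 0 ≤ K := by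
  obtain ⟨x, hx⟩ := exists_ne (0 : E)
  have hpos : 0 < ‖x - 0‖ ^ s := Real.rpow_pos_of_pos (by simpa using hx) s
  exact nonneg_of_mul_nonneg_left ((norm_nonneg _).trans (hf x 0)) hpos

end Holder

section Radial

variable {a b ν : ℝ}

lemma integrableOn_min_rpow (ha : 0 ≤ a) (hb : 0 ≤ b) (hν : 0 < ν) :
    IntegrableOn (fun r : ℝ => min (a * r ^ (ν - 1)) (b * r ^ (-ν - 1))) (Ioi 0) := by
  have hmeas : AEStronglyMeasurable (fun r : ℝ => min (a * r ^ (ν - 1)) (b * r ^ (-ν - 1)))  := by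
    fun_prop
  have hnorm : ∀ r : ℝ, 0 < r →
      ‖min (a * r ^ (ν - 1)) (b * r ^ (-ν - 1))‖ = min (a * r ^ (ν - 1)) (b * r ^ (-ν - 1)) :=
    fun r hr => Real.norm_of_nonneg (by positivity)
  rw [← Ioc_union_Ioi_eq_Ioi zero_le_one]
  refine IntegrableOn.union ?_ ?_
  · have hrpow : IntegrableOn (fun r : ℝ => a * r ^ (ν - 1)) (Ioc 0 1) :=
      ((intervalIntegrable_iff_integrableOn_Ioc_of_le zero_le_one).1
        (intervalIntegral.intervalIntegrable_rpow' (by linarith))).const_mul a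
    refine hrpow.mono' hmeas.restrict ((ae_restrict_iff' measurableSet_Ioc).2 (.of_forall ?_))
    exact fun r hr => (hnorm r hr.1).trans_le (min_le_left _ _)
  · have hrpow : IntegrableOn (fun r : ℝ => b * r ^ (-ν - 1)) (Ioi 1) :=
      (integrableOn_Ioi_rpow_of_lt (by linarith) zero_lt_one).const_mul b
    refine hrpow.mono' hmeas.restrict ((ae_restrict_iff' measurableSet_Ioi).2 (.of_forall ?_))
    exact fun r hr => (hnorm r (zero_lt_one.trans hr)).trans_le (min_le_right _ _)

lemma integral_Ioc_rpow_sub_one (hν : 0 < ν) (R : ℝ) (hR : 0 ≤ R) :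
    ∫ r in Ioc 0 R, r ^ (ν - 1) = R ^ ν / ν := by
  rw [← intervalIntegral.integral_of_le hR, integral_rpow (.inl (by linarith)),
    sub_add_cancel, Real.zero_rpow hν.ne', sub_zero]

lemma integral_Ioi_rpow_neg_sub_one (hν : 0 < ν) {R : ℝ} (hR : 0 < R) :
    ∫ r in Ioi R, r ^ (-ν - 1) = R ^ (-ν) / ν := by
  rw [integral_Ioi_rpow_of_lt (by linarith) hR, sub_add_cancel, neg_div, div_neg, neg_neg]

lemma integral_min_rpow_le (ha : 0 ≤ a) (hb : 0 ≤ b) (hν : 0 < ν) :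
    ∫ r in Ioi 0, min (a * r ^ (ν - 1)) (b * r ^ (-ν - 1)) ≤ 2 * √a * √b / ν := by
  rcases ha.eq_or_lt with rfl | ha
  · refine (integral_nonpos fun r => ?_).trans (by simp)
    exact (min_le_left _ _).trans (zero_mul _).le
  rcases hb.eq_or_lt with rfl | hb
  · refine (integral_nonpos fun r => ?_).trans (by simp)
    exact (min_le_right _ _).trans (zero_mul _).le
  set R := (√b / √a) ^ ν⁻¹
  have hR : 0 < R := by positivity
  have hRν : R ^ ν = √b / √a := Real.rpow_inv_rpow (by positivity) hν.ne'
  have hint := integrableOn_min_rpow ha.le hb.le hν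
  calc ∫ r in Ioi 0, min (a * r ^ (ν - 1)) (b * r ^ (-ν - 1))
      = (∫ r in Ioc 0 R, min (a * r ^ (ν - 1)) (b * r ^ (-ν - 1))) +
          ∫ r in Ioi R, min (a * r ^ (ν - 1)) (b * r ^ (-ν - 1)) := by
        rw [← Ioc_union_Ioi_eq_Ioi hR.le, setIntegral_union (Ioc_disjoint_Ioi le_rfl)
          measurableSet_Ioi (hint.mono_set Ioc_subset_Ioi_self)
          (hint.mono_set (Ioi_subset_Ioi hR.le))]
    _ ≤ (∫ r in Ioc 0 R, a * r ^ (ν - 1)) + ∫ r in Ioi R, b * r ^ (-ν - 1) := by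
        refine add_le_add ?_ ?_
        · exact setIntegral_mono_on (hint.mono_set Ioc_subset_Ioi_self)
            (((intervalIntegrable_iff_integrableOn_Ioc_of_le hR.le).1
              (intervalIntegral.intervalIntegrable_rpow' (by linarith))).const_mul a)
            measurableSet_Ioc fun r _ => min_le_left _ _
        · exact setIntegral_mono_on (hint.mono_set (Ioi_subset_Ioi hR.le))
            ((integrableOn_Ioi_rpow_of_lt (by linarith) hR).const_mul b)
            measurableSet_Ioi fun r _ => min_le_right _ _
    _ = a * (R ^ ν / ν) + b * (R ^ (-ν) / ν) := by
        rw [integral_const_mul, integral_const_mul, integral_Ioc_rpow_sub_one hν R hR.le,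
          integral_Ioi_rpow_neg_sub_one hν hR]
    _ = 2 * √a * √b / ν := by
        have hsa : 0 < √a := Real.sqrt_pos.2 ha
        have hsb : 0 < √b := Real.sqrt_pos.2 hb
        have hleft : a * R ^ ν = √a * √b := by
          rw [hRν]
          nth_rw 1 [← Real.mul_self_sqrt ha.le]
          field_simp
        have hright : b * R ^ (-ν) = √a * √b := by
          rw [Real.rpow_neg hR.le, hRν, inv_div]
          nth_rw 1 [← Real.mul_self_sqrt hb.le]
          field_simp
        rw [mul_div_assoc', mul_div_assoc', hleft, hright]
        ring

end Radial

lemma pow_sub_one_mul_rpow_div_pow {r : ℝ} (hr : 0 < r) {n : ℕ} (hn : 1 ≤ n) (s : ℝ) :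
    r ^ (n - 1) * r ^ s / r ^ (n + 1) = r ^ (s - 2) := by
  rw [← Real.rpow_natCast, ← Real.rpow_natCast, Nat.cast_sub hn, Nat.cast_add, Nat.cast_one,
    ← Real.rpow_add hr, ← Real.rpow_sub hr]
  ring_nf

lemma pow_sub_one_mul_min_rpow_div_pow {y : ℝ} (hy : 0 < y) {n : ℕ} (hn : 1 ≤ n)
    (ν A B Kg : ℝ) :
    y ^ (n - 1) *
        (Kg * min (A * y ^ ((1 : ℝ) / 2 + ν)) (B * y ^ ((1 : ℝ) / 2 - ν)) * y ^ ((1 : ℝ) / 2) /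
          y ^ (n + 1)) =
      Kg * min (A * y ^ (ν - 1)) (B * y ^ (-ν - 1)) := by
  have hpow : y ^ (n - 1) * y ^ ((1 : ℝ) / 2) / y ^ (n + 1) = y ^ (-3 / 2 : ℝ) := by
    rw [pow_sub_one_mul_rpow_div_pow hy hn]
    norm_num
  have hshift : ∀ s : ℝ, y ^ s * y ^ (-3 / 2 : ℝ) = y ^ (s - 3 / 2) := fun s => by
    rw [← Real.rpow_add hy]
    ring_nf
  calc _ = Kg * (min (A * y ^ ((1 : ℝ) / 2 + ν)) (B * y ^ ((1 : ℝ) / 2 - ν)) *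
          (y ^ (n - 1) * y ^ ((1 : ℝ) / 2) / y ^ (n + 1))) := by ring
    _ = Kg * min (A * y ^ (ν - 1)) (B * y ^ (-ν - 1)) := by
        rw [hpow, min_mul_of_nonneg _ _ (by positivity), mul_assoc, mul_assoc, hshift, hshift]
        ring_nf

lemma iSup_norm_sub_mul_iSup_norm_sub_div_le {E F G : Type*} [SeminormedAddCommGroup E]
    [SeminormedAddCommGroup F] [SeminormedAddCommGroup G] {f : E → F} {g : E → G}
    {ν Kg Kfp Kfm : ℝ} (hKfp : 0 ≤ Kfp) (hKfm : 0 ≤ Kfm)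
    (hg : ∀ x y, ‖g x - g y‖ ≤ Kg * ‖x - y‖ ^ ((1 : ℝ) / 2))
    (hfp : ∀ x y, ‖f x - f y‖ ≤ Kfp * ‖x - y‖ ^ ((1 : ℝ) / 2 + ν))
    (hfm : ∀ x y, ‖f x - f y‖ ≤ Kfm * ‖x - y‖ ^ ((1 : ℝ) / 2 - ν)) (n : ℕ) (α : E) :
    ((⨆ x, ‖f x - f (x - α)‖) * (⨆ x, ‖g x - g (x - α)‖)) / ‖α‖ ^ n ≤
      Kg * min (Kfp * ‖α‖ ^ ((1 : ℝ) / 2 + ν)) (Kfm * ‖α‖ ^ ((1 : ℝ) / 2 - ν)) *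
        ‖α‖ ^ ((1 : ℝ) / 2) / ‖α‖ ^ n := by
  have hf := le_min (iSup_norm_sub_sub_le_of_norm_sub_le hfp α)
    (iSup_norm_sub_sub_le_of_norm_sub_le hfm α)
  have hprod := mul_le_mul hf (iSup_norm_sub_sub_le_of_norm_sub_le hg α)
    (Real.iSup_nonneg fun _ => norm_nonneg _) (le_min (by positivity) (by positivity))
  refine div_le_div_of_nonneg_right (hprod.trans_eq ?_) (by positivity)
  ring

theorem integral_iSup_norm_sub_mul_iSup_norm_sub_le {E F G : Type*} [NormedAddCommGroup E]
    [NormedSpace ℝ E] [FiniteDimensional ℝ E] [Nontrivial E] [MeasurableSpace E] [BorelSpace E]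
    (μ : Measure E) [μ.IsAddHaarMeasure] [SeminormedAddCommGroup F] [SeminormedAddCommGroup G]
    {f : E → F} {g : E → G} {ν Kg Kfp Kfm : ℝ} (hν : 0 < ν)
    (hg : ∀ x y, ‖g x - g y‖ ≤ Kg * ‖x - y‖ ^ ((1 : ℝ) / 2))
    (hfp : ∀ x y, ‖f x - f y‖ ≤ Kfp * ‖x - y‖ ^ ((1 : ℝ) / 2 + ν))
    (hfm : ∀ x y, ‖f x - f y‖ ≤ Kfm * ‖x - y‖ ^ ((1 : ℝ) / 2 - ν)) :
    ∫ α, ((⨆ x, ‖f x - f (x - α)‖) * (⨆ x, ‖g x - g (x - α)‖)) / ‖α‖ ^ (finrank ℝ E + 1) ∂μ ≤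
      2 * finrank ℝ E * μ.real (ball 0 1) / ν * Kg * √Kfp * √Kfm := by
  set n := finrank ℝ E
  have hKg := nonneg_of_norm_sub_le_mul_rpow hg
  have hKfp := nonneg_of_norm_sub_le_mul_rpow hfp
  have hKfm := nonneg_of_norm_sub_le_mul_rpow hfm
  set ψ : ℝ → ℝ := fun r =>
    Kg * min (Kfp * r ^ ((1 : ℝ) / 2 + ν)) (Kfm * r ^ ((1 : ℝ) / 2 - ν)) * r ^ ((1 : ℝ) / 2) /
      r ^ (n + 1)
  have hradial : EqOn (fun y => y ^ (n - 1) • ψ y)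
      (fun y => Kg * min (Kfp * y ^ (ν - 1)) (Kfm * y ^ (-ν - 1))) (Ioi 0) :=
    fun y hy => pow_sub_one_mul_min_rpow_div_pow hy finrank_pos ν Kfp Kfm Kg
  have hψ : Integrable (fun α : E => ψ ‖α‖) μ :=
    (integrable_fun_norm_addHaar μ).2 <| IntegrableOn.congr_fun
      ((integrableOn_min_rpow hKfp hKfm hν).const_mul Kg) hradial.symm measurableSet_Ioi
  calc ∫ α, ((⨆ x, ‖f x - f (x - α)‖) * (⨆ x, ‖g x - g (x - α)‖)) / ‖α‖ ^ (n + 1) ∂μ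
      ≤ ∫ α, ψ ‖α‖ ∂μ :=
        integral_mono_of_nonneg (.of_forall fun α => div_nonneg (mul_nonneg
          (Real.iSup_nonneg fun _ => norm_nonneg _) (Real.iSup_nonneg fun _ => norm_nonneg _))
          (by positivity)) hψ
          (.of_forall (iSup_norm_sub_mul_iSup_norm_sub_div_le hKfp hKfm hg hfp hfm _))
    _ = n * μ.real (ball 0 1) *
          (Kg * ∫ y in Ioi 0, min (Kfp * y ^ (ν - 1)) (Kfm * y ^ (-ν - 1))) := by
        rw [integral_fun_norm_addHaar, setIntegral_congr_fun measurableSet_Ioi hradial,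
          integral_const_mul, nsmul_eq_mul, smul_eq_mul, mul_assoc]
    _ ≤ n * μ.real (ball 0 1) * (Kg * (2 * √Kfp * √Kfm / ν)) := by
        gcongr
        exact integral_min_rpow_le hKfp hKfm hν
    _ = 2 * n * μ.real (ball 0 1) / ν * Kg * √Kfp * √Kfm := by ring

theorem finite_difference_product_integral_bound_general
    (d N : ℕ) (hd : 1 ≤ d) (ν : ℝ) (hν : ν ∈ Ioo (0 : ℝ) (1 / 2)) :
    ∃ C : ℝ, 0 < C ∧
      ∀ (f g : EuclideanSpace ℝ (Fin d) → EuclideanSpace ℝ (Fin N)) (Kg Kfp Kfm : ℝ),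
        (∀ x y, ‖g x - g y‖ ≤ Kg * ‖x - y‖ ^ ((1 : ℝ) / 2)) →
        (∀ x y, ‖f x - f y‖ ≤ Kfp * ‖x - y‖ ^ ((1 : ℝ) / 2 + ν)) →
        (∀ x y, ‖f x - f y‖ ≤ Kfm * ‖x - y‖ ^ ((1 : ℝ) / 2 - ν)) →
        (∫ α : EuclideanSpace ℝ (Fin d),
            ((⨆ x, ‖f x - f (x - α)‖) * (⨆ x, ‖g x - g (x - α)‖)) / ‖α‖ ^ (d + 1)) ≤
          C * Kg * Real.sqrt Kfp * Real.sqrt Kfm := by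
  have : Nontrivial (EuclideanSpace ℝ (Fin d)) :=
    nontrivial_of_finrank_pos (R := ℝ) (by rw [finrank_euclideanSpace_fin]; omega)
  have hball : 0 < volume.real (ball (0 : EuclideanSpace ℝ (Fin d)) 1) :=
    ENNReal.toReal_pos (measure_ball_pos _ _ one_pos).ne' measure_ball_lt_top.ne
  refine ⟨2 * d * volume.real (ball (0 : EuclideanSpace ℝ (Fin d)) 1) / ν, ?_,
    fun f g Kg Kfp Kfm hg hfp hfm => ?_⟩
  · have hd0 : (0 : ℝ) < d := by exact_mod_cast hd
    have hν0 := hν.1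
    positivity
  simpa only [finrank_euclideanSpace_fin] using
    integral_iSup_norm_sub_mul_iSup_norm_sub_le volume hν.1 hg hfp hfm

/-- Integral bound for products of finite differences:
`∫ (sup_x ‖δ_α f‖)(sup_x ‖δ_α g‖) dα/|α|^{d+1} ≲ [g]_{Ċ^{1/2}} [f]_{Ċ^{1/2+ν}}^{1/2} [f]_{Ċ^{1/2−ν}}^{1/2}`. -/
theorem finite_difference_product_integral_bound
    (d N : ℕ) (hd : 1 ≤ d) (hN : 1 ≤ N) (ν : ℝ) (hν : ν ∈ Ioo (0 : ℝ) (1 / 2)) :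
    ∃ C : ℝ, 0 < C ∧
      ∀ (f g : EuclideanSpace ℝ (Fin d) → EuclideanSpace ℝ (Fin N)) (Kg Kfp Kfm : ℝ),
        (∀ x y, ‖g x - g y‖ ≤ Kg * ‖x - y‖ ^ ((1 : ℝ) / 2)) →
        (∀ x y, ‖f x - f y‖ ≤ Kfp * ‖x - y‖ ^ ((1 : ℝ) / 2 + ν)) →
        (∀ x y, ‖f x - f y‖ ≤ Kfm * ‖x - y‖ ^ ((1 : ℝ) / 2 - ν)) →
        (∫ α : EuclideanSpace ℝ (Fin d),
            ((⨆ x, ‖f x - f (x - α)‖) * (⨆ x, ‖g x - g (x - α)‖)) / ‖α‖ ^ (d + 1)) ≤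
          C * Kg * Real.sqrt Kfp * Real.sqrt Kfm :=
  finite_difference_product_integral_bound_general d N hd ν hν
end
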